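/- arXiv:2203.00263 — 6 statements merged into one kernel-verified Lean document; each statement's English description precedes it below -/
import Mathlib

section
/- For any real numbers a and γ > 0, the integral from 0 to ∞ of e^{-t}·Φ(a - t/γ) dt equals Φ(a) - e^{γ²/2 - aγ}·Φ(a - γ), where Φ is the standard Gaussian CDF. -/
open MeasureTheory

/-- The standard Gaussian cumulative distribution function. -/
noncomputable def Phi (x : ℝ) : ℝ :=
  ∫ u in Set.Iic x, Real.exp (-u ^ 2 / 2) / Real.sqrt (2 * Real.pi)

open Set Real

noncomputable def phi' (u : ℝ) : ℝ := Real.exp (-u ^ 2 / 2) / Real.sqrt (2 * Real.pi)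

lemma phi'_integrable : Integrable phi' := by
  have h := integrable_exp_neg_mul_sq (by norm_num : (0:ℝ) < 1/2)
  have : phi' = fun u => Real.exp (-(1/2) * u^2) / Real.sqrt (2*Real.pi) := by
    funext u; unfold phi'; ring_nf
  rw [this]; exact h.div_const _

lemma exp_mul_phi' (γ u : ℝ) :
    Real.exp (γ * u) * phi' u = Real.exp (γ^2/2) * phi' (u - γ) := by
  unfold phi'
  rw [← mul_div_assoc, ← mul_div_assoc, ← Real.exp_add, ← Real.exp_add]
  ring_nf

lemma Phi_eq (x : ℝ) : Phi x = ∫ u in Set.Iic x, phi' u := rfl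

lemma translate_Iic (b γ : ℝ) : ∫ u in Iic b, phi' (u - γ) = ∫ u in Iic (b - γ), phi' u := by
  rw [← integral_indicator measurableSet_Iic, ← integral_indicator measurableSet_Iic]
  have : (Iic b).indicator (fun u => phi' (u - γ)) =
      fun u => (Iic (b - γ)).indicator phi' (u - γ) := by
    funext u
    by_cases h : u ≤ b
    · rw [indicator_of_mem (mem_Iic.mpr h), indicator_of_mem (mem_Iic.mpr (by linarith))]
    · rw [indicator_of_notMem (by simpa [mem_Iic] using h), indicator_of_notMem (by simp only [mem_Iic]; push_neg at h ⊢; linarith)]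
  rw [this, integral_sub_right_eq_self ((Iic (b - γ)).indicator phi') γ]

lemma exp_Ioc (c : ℝ) (h : 0 ≤ c) :
    ∫ t in Ioc (0:ℝ) c, Real.exp (-t) = 1 - Real.exp (-c) := by
  rw [← intervalIntegral.integral_of_le h, intervalIntegral.integral_comp_neg Real.exp,
    integral_exp]
  simp

lemma key1 (γ b : ℝ) : ∫ u in Iic b, Real.exp (γ * u) * phi' u
    = Real.exp (γ^2/2) * Phi (b - γ) := by
  simp_rw [exp_mul_phi']
  rw [integral_const_mul, translate_Iic, Phi_eq]

lemma exp_phi'_integrableOn (γ b : ℝ) :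
    IntegrableOn (fun u => Real.exp (γ * u) * phi' u) (Iic b) := by
  simp_rw [exp_mul_phi']
  exact ((phi'_integrable.comp_sub_right γ).const_mul _).integrableOn

theorem gaussian_integral_exp_neg (a γ : ℝ) (hγ : 0 < γ) :
    ∫ t in Set.Ioi (0 : ℝ), Real.exp (-t) * Phi (a - t / γ) =
      Phi a - Real.exp (γ ^ 2 / 2 - a * γ) * Phi (a - γ) := by
  set μ := volume.restrict (Ioi (0:ℝ)) with hμ
  set S : Set (ℝ × ℝ) := {p | p.2 ≤ a - p.1 / γ} with hS
  have hSmeas : MeasurableSet S := by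
    have : S = {p : ℝ × ℝ | p.2 + p.1 / γ ≤ a} := by
      ext p; simp only [hS, mem_setOf_eq]; constructor <;> intro h <;> linarith
    rw [this]
    exact measurableSet_le (by fun_prop) measurable_const
  set g : ℝ × ℝ → ℝ := fun p => Real.exp (-p.1) * phi' p.2 with hg
  have hexp : Integrable (fun t => Real.exp (-t)) μ := by
    have := exp_neg_integrableOn_Ioi 0 (zero_lt_one (α := ℝ))
    simp at this; exact this
  have hint : Integrable (S.indicator g) (μ.prod volume) :=
    (hexp.mul_prod phi'_integrable).indicator hSmeas
  have hswap : ∫ t, ∫ u, S.indicator g (t, u) ∂(volume : Measure ℝ) ∂μ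
      = ∫ u, ∫ t, S.indicator g (t, u) ∂μ ∂(volume : Measure ℝ) :=
    integral_integral_swap hint
  -- Step A : inner integral in u
  have stepA : ∀ t : ℝ, (∫ u, S.indicator g (t, u) ∂(volume : Measure ℝ))
      = Real.exp (-t) * Phi (a - t / γ) := by
    intro t
    have : (fun u => S.indicator g (t, u))
        = (Iic (a - t / γ)).indicator (fun u => Real.exp (-t) * phi' u) := by
      funext u
      by_cases h : u ≤ a - t / γ
      · rw [indicator_of_mem (by exact h : (t, u) ∈ S), indicator_of_mem (mem_Iic.mpr h)]
      · rw [indicator_of_notMem (by exact h : (t, u) ∉ S),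
          indicator_of_notMem (by simpa [mem_Iic] using h)]
    rw [this, integral_indicator measurableSet_Iic, integral_const_mul, Phi_eq]
  -- Step C : inner integral in t
  have stepC : ∀ u : ℝ, (∫ t, S.indicator g (t, u) ∂μ)
      = (Iic a).indicator (fun u => phi' u * (1 - Real.exp (-(γ * (a - u))))) u := by
    intro u
    have hrw : (fun t => S.indicator g (t, u))
        = (Iic (γ * (a - u))).indicator (fun t => Real.exp (-t) * phi' u) := by
      funext t
      by_cases h : u ≤ a - t / γ
      · rw [indicator_of_mem (by exact h : (t, u) ∈ S),
          indicator_of_mem (mem_Iic.mpr (by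
            have h' : t / γ ≤ a - u := by linarith
            have h2 := (div_le_iff₀ hγ).mp h'
            linarith [mul_comm (a - u) γ]))]
      · rw [indicator_of_notMem (by exact h : (t, u) ∉ S),
          indicator_of_notMem (by
            simp only [mem_Iic]; push_neg at h ⊢
            have h' : a - u < t / γ := by linarith
            have h2 := (lt_div_iff₀ hγ).mp h'
            linarith [mul_comm (a - u) γ])]
    rw [hμ, hrw, setIntegral_indicator measurableSet_Iic, Ioi_inter_Iic]
    by_cases hu : u ≤ a
    · have hc : 0 ≤ γ * (a - u) := mul_nonneg hγ.le (by linarith)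
      rw [integral_mul_const, exp_Ioc _ hc, indicator_of_mem (mem_Iic.mpr hu)]
      ring
    · have hc : γ * (a - u) ≤ 0 := by
        push_neg at hu
        nlinarith
      rw [Set.Ioc_eq_empty (by simpa using hc), indicator_of_notMem (by simpa [mem_Iic] using hu)]
      simp
  -- assemble
  calc ∫ t in Set.Ioi (0 : ℝ), Real.exp (-t) * Phi (a - t / γ)
      = ∫ t, ∫ u, S.indicator g (t, u) ∂(volume : Measure ℝ) ∂μ := by
        rw [hμ]; exact (setIntegral_congr_fun measurableSet_Ioi (fun t _ => (stepA t).symm))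
    _ = ∫ u, ∫ t, S.indicator g (t, u) ∂μ ∂(volume : Measure ℝ) := hswap
    _ = ∫ u, (Iic a).indicator (fun u => phi' u * (1 - Real.exp (-(γ * (a - u))))) u := by
        exact integral_congr_ae (Filter.Eventually.of_forall stepC)
    _ = ∫ u in Iic a, phi' u * (1 - Real.exp (-(γ * (a - u)))) :=
        integral_indicator measurableSet_Iic
    _ = ∫ u in Iic a, (phi' u - Real.exp (-(a * γ)) * (Real.exp (γ * u) * phi' u)) := by
        apply setIntegral_congr_fun measurableSet_Iic
        intro u _
        simp only
        rw [show -(γ * (a - u)) = γ * u + -(a * γ) by ring, Real.exp_add]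
        ring
    _ = (∫ u in Iic a, phi' u) - ∫ u in Iic a, Real.exp (-(a * γ)) * (Real.exp (γ * u) * phi' u) := by
        apply integral_sub phi'_integrable.integrableOn
        exact (exp_phi'_integrableOn γ a).const_mul _
    _ = Phi a - Real.exp (γ ^ 2 / 2 - a * γ) * Phi (a - γ) := by
        rw [integral_const_mul, key1, ← Phi_eq]
        rw [show γ ^ 2 / 2 - a * γ = -(a * γ) + γ^2/2 by ring, Real.exp_add]
        ring
end

section
/- The privacy curve of the Gaussian mechanism satisfies: for all ε ≥ 0 and s > 0, δ(N(0,1)‖N(s,1))(ε) = Φ(-ε/s + s/2) - e^ε·Φ(-ε/s - s/2). -/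
open MeasureTheory ProbabilityTheory

/-- The privacy curve `δ(X‖Y)(ε) = sup_S (Pr[Y ∈ S] - e^ε Pr[X ∈ S])`. -/
noncomputable def privacyCurve (X Y : Measure ℝ) (ε : ℝ) : ℝ :=
  sSup {r : ℝ | ∃ S : Set ℝ, MeasurableSet S ∧
    r = (Y S).toReal - Real.exp ε * (X S).toReal}

lemma gaussianPDFReal_one_eq (m x : ℝ) : gaussianPDFReal m 1 x
    = Real.exp (-(x - m) ^ 2 / 2) / Real.sqrt (2 * Real.pi) := by
  simp [gaussianPDFReal, div_eq_inv_mul]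

lemma gaussianReal_toReal_eq_integral (m : ℝ) (S : Set ℝ) :
    ((gaussianReal m 1) S).toReal = ∫ x in S, gaussianPDFReal m 1 x := by
  rw [gaussianReal_apply_eq_integral m one_ne_zero,
    ENNReal.toReal_ofReal (integral_nonneg fun x => gaussianPDFReal_nonneg m 1 x)]

lemma Phi_eq_integral_pdf (y : ℝ) : Phi y = ∫ u in Set.Iic y, gaussianPDFReal 0 1 u := by
  unfold Phi
  refine setIntegral_congr_fun measurableSet_Iic fun u _ => ?_
  rw [gaussianPDFReal_one_eq]; ring_nf

lemma gaussianReal_map_neg_one_mul :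
    (gaussianReal 0 1).map (fun x : ℝ => -1 * x) = gaussianReal 0 1 := by
  rw [gaussianReal_map_const_mul (-1 : ℝ)]
  norm_num

lemma gaussianReal_Ioi_toReal (m a : ℝ) :
    ((gaussianReal m 1) (Set.Ioi a)).toReal = Phi (m - a) := by
  have h1 : gaussianReal m 1 = (gaussianReal 0 1).map (· + m) := by
    simpa using (gaussianReal_map_add_const (μ := 0) (v := 1) m).symm
  rw [h1, Measure.map_apply (measurable_add_const m) measurableSet_Ioi,
    Set.preimage_add_const_Ioi]
  rw [← gaussianReal_map_neg_one_mul,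
    Measure.map_apply (measurable_const_mul (-1)) measurableSet_Ioi]
  have hpre : (fun x : ℝ => -1 * x) ⁻¹' Set.Ioi (a - m) = Set.Iio (m - a) := by
    ext x
    simp only [Set.mem_preimage, Set.mem_Ioi, Set.mem_Iio, neg_one_mul]
    constructor <;> intro h <;> linarith
  rw [hpre, gaussianReal_toReal_eq_integral, Phi_eq_integral_pdf,
    integral_Iic_eq_integral_Iio]

/-- The privacy curve of the Gaussian mechanism. -/
theorem gaussian_privacy_curve (ε s : ℝ) (hε : 0 ≤ ε) (hs : 0 < s) :
    privacyCurve (gaussianReal 0 1) (gaussianReal s 1) ε =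
      Phi (-ε / s + s / 2) - Real.exp ε * Phi (-ε / s - s / 2) := by
  set a : ℝ := ε / s + s / 2 with ha
  set T : Set ℝ := Set.Ioi a with hT
  have hTm : MeasurableSet T := measurableSet_Ioi
  set h : ℝ → ℝ := fun x => gaussianPDFReal s 1 x - Real.exp ε * gaussianPDFReal 0 1 x with hh
  have hint : Integrable h := (integrable_gaussianPDFReal s 1).sub
    ((integrable_gaussianPDFReal 0 1).const_mul _)
  -- value of a set as an integral
  have hval : ∀ S : Set ℝ, ((gaussianReal s 1) S).toReal
      - Real.exp ε * ((gaussianReal 0 1) S).toReal = ∫ x in S, h x := by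
    intro S
    rw [gaussianReal_toReal_eq_integral, gaussianReal_toReal_eq_integral, ← integral_const_mul,
      ← integral_sub ((integrable_gaussianPDFReal s 1).restrict)
        (((integrable_gaussianPDFReal 0 1).const_mul _).restrict)]
  -- sign of h
  have hsa : s * a = ε + s ^ 2 / 2 := by rw [ha]; field_simp [hs.ne']
  have e1 : s - a = -ε / s + s / 2 := by rw [ha]; ring
  have e2 : (0 : ℝ) - a = -ε / s - s / 2 := by rw [ha]; ring
  clear_value a
  have hsign_le : ∀ x : ℝ, x ≤ a → h x ≤ 0 := by
    intro x hx
    have hkey : Real.exp ε * Real.exp (-(x - 0) ^ 2 / 2) ≥ Real.exp (-(x - s) ^ 2 / 2) := by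
      rw [← Real.exp_add]
      apply Real.exp_le_exp.mpr
      nlinarith [mul_le_mul_of_nonneg_left hx hs.le]
    simp only [hh, gaussianPDFReal_one_eq]
    rw [← mul_div_assoc, ← sub_div]
    apply div_nonpos_of_nonpos_of_nonneg _ (Real.sqrt_nonneg _)
    linarith
  have hsign_ge : ∀ x : ℝ, a ≤ x → 0 ≤ h x := by
    intro x hx
    have hkey : Real.exp ε * Real.exp (-(x - 0) ^ 2 / 2) ≤ Real.exp (-(x - s) ^ 2 / 2) := by
      rw [← Real.exp_add]
      apply Real.exp_le_exp.mpr
      nlinarith [mul_le_mul_of_nonneg_left hx hs.le]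
    simp only [hh, gaussianPDFReal_one_eq]
    rw [← mul_div_assoc, ← sub_div]
    apply div_nonneg _ (Real.sqrt_nonneg _)
    linarith
  -- the supremum is attained at T
  have hbound : ∀ S : Set ℝ, MeasurableSet S → ∫ x in S, h x ≤ ∫ x in T, h x := by
    intro S hS
    rw [← integral_indicator hS, ← integral_indicator hTm]
    refine integral_mono (hint.indicator hS) (hint.indicator hTm) fun x => ?_
    by_cases hx : x ∈ T
    · rw [Set.indicator_of_mem hx]
      by_cases hxS : x ∈ S
      · rw [Set.indicator_of_mem hxS]
      · rw [Set.indicator_of_notMem hxS]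
        exact hsign_ge x (le_of_lt hx)
    · rw [Set.indicator_of_notMem hx]
      by_cases hxS : x ∈ S
      · rw [Set.indicator_of_mem hxS]
        exact hsign_le x (le_of_not_gt hx)
      · rw [Set.indicator_of_notMem hxS]
  have hTval : ((gaussianReal s 1) T).toReal - Real.exp ε * ((gaussianReal 0 1) T).toReal
      = Phi (-ε / s + s / 2) - Real.exp ε * Phi (-ε / s - s / 2) := by
    rw [gaussianReal_Ioi_toReal, gaussianReal_Ioi_toReal]
    rw [e1, e2]
  refine IsGreatest.csSup_eq ?_
  constructor
  · exact ⟨T, hTm, hTval.symm⟩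
  · rintro r ⟨S, hS, rfl⟩
    rw [← hTval, hval S, hval T]
    exact hbound S hS
end

section
/- For any constants 0 < δ < 1/2 and ε > 0, if |s| ≤ √(2 log(1/(2δ)) + 2ε) - √(2 log(1/(2δ))), then the privacy curve satisfies δ(N(0,1)‖N(s,1))(ε) ≤ δ. -/
open MeasureTheory ProbabilityTheory
open scoped ENNReal NNReal

lemma gauss_pdf_ratio (m₁ m₂ r x : ℝ) (h : -(x - m₁)^2/2 ≤ r + -(x - m₂)^2/2) :
    gaussianPDFReal m₁ 1 x ≤ Real.exp r * gaussianPDFReal m₂ 1 x := by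
  simp only [gaussianPDFReal, NNReal.coe_one, mul_one]
  rw [mul_comm (Real.exp r), mul_assoc]
  refine mul_le_mul_of_nonneg_left ?_ (by positivity)
  rw [← Real.exp_add, Real.exp_le_exp]
  linarith

lemma gauss_cmp (m₁ m₂ c : ℝ) (hc : 0 ≤ c) {B : Set ℝ}
    (h : ∀ x ∈ B, gaussianPDFReal m₁ 1 x ≤ c * gaussianPDFReal m₂ 1 x) :
    gaussianReal m₁ 1 B ≤ ENNReal.ofReal c * gaussianReal m₂ 1 B := by
  rw [gaussianReal_apply _ one_ne_zero, gaussianReal_apply _ one_ne_zero,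
    ← lintegral_const_mul' _ _ ENNReal.ofReal_ne_top]
  refine setLIntegral_mono ((measurable_gaussianPDF m₂ 1).const_mul _) (fun x hx => ?_)
  rw [gaussianPDF, gaussianPDF, ← ENNReal.ofReal_mul hc]
  exact ENNReal.ofReal_le_ofReal (h x hx)

lemma gauss_symm (m : ℝ) :
    gaussianReal m 1 (Set.Ici m) = gaussianReal m 1 (Set.Iic m) := by
  have h1 : (gaussianReal m 1).map (fun x => -1 * x) = gaussianReal (-1 * m) 1 := by
    rw [gaussianReal_map_const_mul (-1)]
    congr 1
    ext
    norm_num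
  have h2 : (gaussianReal m 1).map (fun x => 2 * m - x) = gaussianReal m 1 := by
    have : (fun x : ℝ => 2 * m - x) = (fun y => y + 2 * m) ∘ (fun x => -1 * x) := by
      ext x; simp; ring
    rw [this, ← Measure.map_map (by fun_prop) (by fun_prop), h1,
      gaussianReal_map_add_const]
    congr 1
    ring
  conv_lhs => rw [← h2]
  rw [Measure.map_apply (by fun_prop) measurableSet_Ici]
  congr 1
  ext x
  simp only [Set.mem_preimage, Set.mem_Ici, Set.mem_Iic]
  constructor <;> intro <;> linarith

lemma gauss_Ici (m : ℝ) : gaussianReal m 1 (Set.Ici m) = 1/2 := by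
  have h0 : gaussianReal m 1 {m} = 0 :=
    gaussianReal_absolutelyContinuous m one_ne_zero (measure_singleton m)
  have hu : gaussianReal m 1 (Set.Iic m ∪ Set.Ici m) + gaussianReal m 1 (Set.Iic m ∩ Set.Ici m)
      = gaussianReal m 1 (Set.Iic m) + gaussianReal m 1 (Set.Ici m) :=
    measure_union_add_inter _ measurableSet_Ici
  rw [Set.Iic_union_Ici, Set.Iic_inter_Ici, Set.Icc_self, h0, measure_univ, add_zero,
    ← gauss_symm] at hu
  rw [ENNReal.eq_div_iff two_ne_zero ENNReal.ofNat_ne_top, two_mul]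
  exact hu.symm

lemma gauss_Iic (m : ℝ) : gaussianReal m 1 (Set.Iic m) = 1/2 := by
  rw [← gauss_symm, gauss_Ici]

set_option maxHeartbeats 1000000 in
lemma key_bound (δ ε s : ℝ) (hδ₀ : 0 < δ) (hδ₁ : δ < 1 / 2) (hε : 0 < ε)
    (hs : |s| ≤ Real.sqrt (2 * Real.log (1 / (2 * δ)) + 2 * ε) -
      Real.sqrt (2 * Real.log (1 / (2 * δ))))
    (S : Set ℝ) (hS : MeasurableSet S) :
    (gaussianReal s 1 S).toReal - Real.exp ε * (gaussianReal 0 1 S).toReal ≤ δ := by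
  have hexp1 : (1:ℝ) ≤ Real.exp ε := Real.one_le_exp hε.le
  by_cases hs0 : s = 0
  · subst hs0
    have h1 : (0:ℝ) ≤ (gaussianReal 0 1 S).toReal := ENNReal.toReal_nonneg
    nlinarith
  -- setup
  set L : ℝ := Real.log (1 / (2 * δ)) with hLdef
  have hL : 0 ≤ L := Real.log_nonneg (by rw [le_div_iff₀ (by linarith)]; linarith)
  set a : ℝ := Real.sqrt (2 * L) with hadef
  set b : ℝ := Real.sqrt (2 * L + 2 * ε) with hbdef
  have ha0 : 0 ≤ a := Real.sqrt_nonneg _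
  have ha : a ^ 2 = 2 * L := Real.sq_sqrt (by linarith)
  have hb : b ^ 2 = 2 * L + 2 * ε := Real.sq_sqrt (by linarith)
  have habs : 0 ≤ |s| := abs_nonneg s
  have hsab : |s| ≤ b - a := hs
  have hsq : s ^ 2 ≤ 2 * ε := by nlinarith [sq_abs s]
  have hsa : |s| * a + s ^ 2 / 2 ≤ ε := by nlinarith [sq_abs s]
  have hs2 : 0 < s ^ 2 := by positivity
  clear hadef hbdef hs
  obtain ⟨c, hsc⟩ : ∃ c : ℝ, s * c = ε + s ^ 2 / 2 :=
    ⟨(ε + s ^ 2 / 2) / s, by field_simp⟩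
  have hst : s * (c - s) = ε - s ^ 2 / 2 := by rw [mul_sub, hsc]; ring
  have ht2 : 2 * L ≤ (c - s) ^ 2 := by
    have h1 : |s| * a ≤ ε - s ^ 2 / 2 := by linarith
    have h2 : (|s| * a) ^ 2 ≤ (ε - s ^ 2 / 2) ^ 2 := by
      nlinarith [mul_nonneg habs ha0]
    have h3 : (s * (c - s)) ^ 2 = (ε - s ^ 2 / 2) ^ 2 := by rw [hst]
    nlinarith [sq_abs s]
  set A : Set ℝ := {x | ε + s ^ 2 / 2 ≤ s * x} with hAdef
  have hA : MeasurableSet A :=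
    measurableSet_le measurable_const (measurable_id.const_mul s)
  -- step a : on complement of A, density comparison
  have hstep1 : gaussianReal s 1 (S \ A) ≤ ENNReal.ofReal (Real.exp ε) * gaussianReal 0 1 S := by
    calc gaussianReal s 1 (S \ A) ≤ ENNReal.ofReal (Real.exp ε) * gaussianReal 0 1 (S \ A) := by
          refine gauss_cmp s 0 _ (Real.exp_nonneg ε) (fun x hx => ?_)
          have hxA : ¬ (ε + s ^ 2 / 2 ≤ s * x) := hx.2
          exact gauss_pdf_ratio s 0 ε x (by nlinarith)
      _ ≤ ENNReal.ofReal (Real.exp ε) * gaussianReal 0 1 S :=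
          mul_le_mul_right (measure_mono Set.diff_subset) _
  -- step b : gaussianReal s 1 A ≤ δ
  have hAhalf : gaussianReal c 1 A = 1/2 := by
    rcases lt_or_gt_of_ne hs0 with hneg | hpos
    · have hset : A = Set.Iic c := by
        ext x
        simp only [hAdef, Set.mem_setOf_eq, Set.mem_Iic]
        constructor <;> intro h <;> nlinarith
      rw [hset, gauss_Iic]
    · have hset : A = Set.Ici c := by
        ext x
        simp only [hAdef, Set.mem_setOf_eq, Set.mem_Ici]
        constructor <;> intro h <;> nlinarith
      rw [hset, gauss_Ici]
  have hexpδ : Real.exp (-((c - s) ^ 2) / 2) * (1 / 2) ≤ δ := by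
    have h2δ : (0:ℝ) < 2 * δ := by linarith
    have hLe : Real.exp (-L) = 2 * δ := by
      rw [hLdef, one_div, Real.log_inv, neg_neg, Real.exp_log h2δ]
    have h : Real.exp (-((c - s) ^ 2) / 2) ≤ Real.exp (-L) :=
      Real.exp_le_exp.mpr (by linarith)
    rw [hLe] at h
    linarith
  have hstep2 : gaussianReal s 1 A ≤ ENNReal.ofReal δ := by
    calc gaussianReal s 1 A
        ≤ ENNReal.ofReal (Real.exp (-((c - s) ^ 2) / 2)) * gaussianReal c 1 A := by
          refine gauss_cmp s c _ (Real.exp_nonneg _) (fun x hx => ?_)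
          have hxA : ε + s ^ 2 / 2 ≤ s * x := hx
          have h1 : 0 ≤ s * (x - c) := by
            have hq : s * (x - c) = s * x - s * c := by ring
            rw [hq, hsc]; linarith
          have hst0 : 0 ≤ s * (c - s) := by rw [hst]; linarith
          have h2 : 0 ≤ (c - s) * (x - c) := by
            have hq : s ^ 2 * ((c - s) * (x - c)) = (s * (c - s)) * (s * (x - c)) := by ring
            have h3 : 0 ≤ s ^ 2 * ((c - s) * (x - c)) := by
              rw [hq]; exact mul_nonneg hst0 h1
            exact (mul_nonneg_iff_of_pos_left hs2).mp h3
          refine gauss_pdf_ratio s c _ x ?_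
          nlinarith
      _ ≤ ENNReal.ofReal δ := by
          rw [hAhalf]
          have h12 : (1/2 : ℝ≥0∞) = ENNReal.ofReal (1/2) := by
            rw [ENNReal.ofReal_div_of_pos two_pos, ENNReal.ofReal_one, ENNReal.ofReal_ofNat]
          rw [h12, ← ENNReal.ofReal_mul (Real.exp_nonneg _)]
          exact ENNReal.ofReal_le_ofReal hexpδ
  -- combine
  have hYS : gaussianReal s 1 S
      ≤ ENNReal.ofReal δ + ENNReal.ofReal (Real.exp ε) * gaussianReal 0 1 S := by
    calc gaussianReal s 1 S = gaussianReal s 1 (S ∩ A) + gaussianReal s 1 (S \ A) :=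
          (measure_inter_add_diff S hA).symm
      _ ≤ gaussianReal s 1 A + ENNReal.ofReal (Real.exp ε) * gaussianReal 0 1 S :=
          add_le_add (measure_mono Set.inter_subset_right) hstep1
      _ ≤ ENNReal.ofReal δ + ENNReal.ofReal (Real.exp ε) * gaussianReal 0 1 S :=
          add_le_add_left hstep2 _
  have hfin : ENNReal.ofReal δ + ENNReal.ofReal (Real.exp ε) * gaussianReal 0 1 S ≠ ⊤ :=
    ENNReal.add_ne_top.mpr ⟨ENNReal.ofReal_ne_top,
      ENNReal.mul_ne_top ENNReal.ofReal_ne_top (measure_ne_top _ _)⟩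
  have hfinal := ENNReal.toReal_mono hfin hYS
  rw [ENNReal.toReal_add ENNReal.ofReal_ne_top
      (ENNReal.mul_ne_top ENNReal.ofReal_ne_top (measure_ne_top _ _)),
    ENNReal.toReal_mul, ENNReal.toReal_ofReal hδ₀.le,
    ENNReal.toReal_ofReal (Real.exp_nonneg _)] at hfinal
  linarith

/-- If `|s| ≤ √(2 log(1/(2δ)) + 2ε) - √(2 log(1/(2δ)))`, then the Gaussian mechanism with
shift `s` is `(ε, δ)`-DP. -/
theorem gaussian_privacy_curve_bound (δ ε s : ℝ) (hδ₀ : 0 < δ) (hδ₁ : δ < 1 / 2)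
    (hε : 0 < ε)
    (hs : |s| ≤ Real.sqrt (2 * Real.log (1 / (2 * δ)) + 2 * ε) -
      Real.sqrt (2 * Real.log (1 / (2 * δ)))) :
    privacyCurve (gaussianReal 0 1) (gaussianReal s 1) ε ≤ δ := by
  refine Real.sSup_le ?_ hδ₀.le
  rintro r ⟨S, hS, rfl⟩
  exact key_bound δ ε s hδ₀ hδ₁ hε hs S hS
end

section
/- Let K ⊆ ℝ^d be convex, k > 0, and F a convex function on K such that e^{-kF} is integrable on K. If x is sampled from the distribution ν with density proportional to exp(-k·F(x)) on K, then E_ν[F(x)] ≤ inf_{x∈K} F(x) + d/k. -/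
open MeasureTheory Set Filter Topology ENNReal Real

theorem gibbs_core {d : ℕ} (K : Set (EuclideanSpace ℝ (Fin d))) (hK : Convex ℝ K)
    (g : EuclideanSpace ℝ (Fin d) → ℝ) (hg : ConvexOn ℝ K g) (hgmeas : Measurable g)
    (hg0 : ∀ x ∈ K, 0 ≤ g x)
    (hinf : ∀ ε > 0, ∃ x₀ ∈ K, g x₀ < ε)
    (hint1 : IntegrableOn (fun x => Real.exp (-g x)) K)
    (hint2 : IntegrableOn (fun x => g x * Real.exp (-g x)) K)
    (hZpos : 0 < ∫ x in K, Real.exp (-g x)) :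
    (∫ x in K, g x * Real.exp (-g x)) ≤ d * ∫ x in K, Real.exp (-g x) := by
  classical
  have hd : Module.finrank ℝ (EuclideanSpace ℝ (Fin d)) = d := finrank_euclideanSpace_fin
  have hKnm : NullMeasurableSet K (volume : Measure (EuclideanSpace ℝ (Fin d))) :=
    hK.nullMeasurableSet _
  set Z := ∫ x in K, Real.exp (-g x) with hZdef
  set J := ∫ x in K, g x * Real.exp (-g x) with hJdef
  have hJ0 : 0 ≤ J := by
    refine integral_nonneg_of_ae ?_
    filter_upwards [ae_restrict_mem₀ hKnm] with x hx
    exact mul_nonneg (hg0 x hx) (Real.exp_nonneg _)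
  have key : ∀ ε > 0, J ≤ Z * (d + ε) := by
    intro ε hε
    obtain ⟨x₀, hx₀K, hx₀⟩ := hinf ε hε
    have hx₀0 : 0 ≤ g x₀ := hg0 x₀ hx₀K
    have main : ∀ lam ∈ Set.Ioo (0:ℝ) 1,
        Z + (1 - lam) * J ≤ ((lam ^ d)⁻¹ * Real.exp ((1 - lam) * ε)) * Z := by
      intro lam hlam
      obtain ⟨hlam0, hlam1⟩ := hlam
      have h1lam : (0:ℝ) < 1 - lam := by linarith
      set S : EuclideanSpace ℝ (Fin d) → EuclideanSpace ℝ (Fin d) :=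
        fun x => lam • x + (1 - lam) • x₀ with hSdef
      have hSmeas : Measurable S := (measurable_id.const_smul lam).add_const _
      have hSK : ∀ x ∈ K, S x ∈ K := fun x hx =>
        hK hx hx₀K hlam0.le h1lam.le (by ring)
      set A := ∫⁻ x in K, ENNReal.ofReal (Real.exp (-g x)) with hAdef
      set B := ∫⁻ x in K, ENNReal.ofReal (g x * Real.exp (-g x)) with hBdef
      have hA : ENNReal.ofReal Z = A :=
        ofReal_integral_eq_lintegral_ofReal hint1
          (Filter.Eventually.of_forall fun x => Real.exp_nonneg _)
      have hB : ENNReal.ofReal J = B := by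
        refine ofReal_integral_eq_lintegral_ofReal hint2 ?_
        filter_upwards [ae_restrict_mem₀ hKnm] with x hx
        exact mul_nonneg (hg0 x hx) (Real.exp_nonneg _)
      have hm1 : Measurable fun x : EuclideanSpace ℝ (Fin d) =>
          ENNReal.ofReal (Real.exp (-g x)) := (hgmeas.neg.exp).ennreal_ofReal
      have hm2 : Measurable fun x : EuclideanSpace ℝ (Fin d) =>
          ENNReal.ofReal (g x * Real.exp (-g x)) :=
        (hgmeas.mul hgmeas.neg.exp).ennreal_ofReal
      set C := ∫⁻ x in K, ENNReal.ofReal (Real.exp (-(lam * g x + (1 - lam) * g x₀)))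
        with hCdef
      -- Step 1: tangent line inequality
      have step1 : A + ENNReal.ofReal (1 - lam) * B ≤
          ∫⁻ x in K, ENNReal.ofReal (Real.exp (-(lam * g x))) := by
        rw [hAdef, hBdef, ← lintegral_const_mul _ hm2, ← lintegral_add_left hm1]
        refine lintegral_mono_ae ?_
        filter_upwards [ae_restrict_mem₀ hKnm] with x hx
        have hgx := hg0 x hx
        rw [← ENNReal.ofReal_mul h1lam.le, ← ENNReal.ofReal_add (Real.exp_nonneg _)
          (by positivity)]
        refine ENNReal.ofReal_le_ofReal ?_
        have h := Real.add_one_le_exp ((1 - lam) * g x)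
        have h2 : Real.exp (-g x) * ((1 - lam) * g x + 1) ≤
            Real.exp (-g x) * Real.exp ((1 - lam) * g x) :=
          mul_le_mul_of_nonneg_left h (Real.exp_nonneg _)
        rw [← Real.exp_add] at h2
        calc Real.exp (-g x) + (1 - lam) * (g x * Real.exp (-g x))
            = Real.exp (-g x) * ((1 - lam) * g x + 1) := by ring
          _ ≤ Real.exp (-g x + (1 - lam) * g x) := h2
          _ = Real.exp (-(lam * g x)) := by ring_nf
      -- Step 2: pull out the constant exp((1-lam) g x₀)
      have step2 : (∫⁻ x in K, ENNReal.ofReal (Real.exp (-(lam * g x)))) =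
          ENNReal.ofReal (Real.exp ((1 - lam) * g x₀)) * C := by
        rw [hCdef, ← lintegral_const_mul (f := fun x => ENNReal.ofReal (Real.exp (-(lam * g x + (1 - lam) * g x₀)))) _ ((hgmeas.const_mul lam).add_const
          _).neg.exp.ennreal_ofReal]
        refine lintegral_congr fun x => ?_
        rw [← ENNReal.ofReal_mul (Real.exp_nonneg _), ← Real.exp_add]
        ring_nf
      -- Step 3: convexity of g
      have step3 : C ≤ ∫⁻ x in K, ENNReal.ofReal (Real.exp (-g (S x))) := by
        refine lintegral_mono_ae ?_
        filter_upwards [ae_restrict_mem₀ hKnm] with x hx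
        refine ENNReal.ofReal_le_ofReal (Real.exp_le_exp.2 ?_)
        have := hg.2 hx hx₀K hlam0.le h1lam.le (by ring : lam + (1 - lam) = 1)
        simp only [smul_eq_mul] at this
        have hSx : g (S x) ≤ lam * g x + (1 - lam) * g x₀ := this
        linarith
      -- Step 4: scaling of the Haar measure
      have step4 : (∫⁻ x in K, ENNReal.ofReal (Real.exp (-g (S x)))) ≤
          ENNReal.ofReal ((lam ^ d)⁻¹) * A := by
        have hmap : (volume.restrict K).map S ≤
            ENNReal.ofReal ((lam ^ d)⁻¹) • volume.restrict K := by
          refine Measure.le_iff.2 fun T hT => ?_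
          rw [Measure.map_apply hSmeas hT, Measure.restrict_apply (hSmeas hT)]
          have hsub : S ⁻¹' T ∩ K ⊆ S ⁻¹' (T ∩ K) := fun x hx => ⟨hx.1, hSK x hx.2⟩
          calc volume (S ⁻¹' T ∩ K) ≤ volume (S ⁻¹' (T ∩ K)) := measure_mono hsub
            _ = ENNReal.ofReal ((lam ^ d)⁻¹) * volume (T ∩ K) := by
                rw [show S ⁻¹' (T ∩ K) =
                    (fun x => lam • x) ⁻¹' ((fun y => y + (1 - lam) • x₀) ⁻¹' (T ∩ K)) from rfl,
                  Measure.addHaar_preimage_smul volume (ne_of_gt hlam0),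
                  measure_preimage_add_right, hd, abs_of_nonneg (by positivity)]
            _ = (ENNReal.ofReal ((lam ^ d)⁻¹) • volume.restrict K) T := by
                rw [Measure.smul_apply, smul_eq_mul, Measure.restrict_apply₀' hKnm]
        calc (∫⁻ x in K, ENNReal.ofReal (Real.exp (-g (S x))))
            = ∫⁻ y, ENNReal.ofReal (Real.exp (-g y)) ∂((volume.restrict K).map S) :=
              (lintegral_map' hm1.aemeasurable hSmeas.aemeasurable).symm
          _ ≤ ∫⁻ y, ENNReal.ofReal (Real.exp (-g y))
                ∂(ENNReal.ofReal ((lam ^ d)⁻¹) • volume.restrict K) :=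
              lintegral_mono' hmap le_rfl
          _ = ENNReal.ofReal ((lam ^ d)⁻¹) * A := by
              rw [lintegral_smul_measure, smul_eq_mul]
      -- combine
      have combined : A + ENNReal.ofReal (1 - lam) * B ≤
          ENNReal.ofReal (Real.exp ((1 - lam) * g x₀)) *
            (ENNReal.ofReal ((lam ^ d)⁻¹) * A) := by
        calc A + ENNReal.ofReal (1 - lam) * B
            ≤ ENNReal.ofReal (Real.exp ((1 - lam) * g x₀)) * C := by
              rw [← step2]; exact step1
          _ ≤ ENNReal.ofReal (Real.exp ((1 - lam) * g x₀)) *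
                (ENNReal.ofReal ((lam ^ d)⁻¹) * A) :=
              mul_le_mul_right (le_trans step3 step4) _
      have hreal : Z + (1 - lam) * J ≤ Real.exp ((1 - lam) * g x₀) * ((lam ^ d)⁻¹ * Z) := by
        have h' : ENNReal.ofReal (Z + (1 - lam) * J) ≤
            ENNReal.ofReal (Real.exp ((1 - lam) * g x₀) * ((lam ^ d)⁻¹ * Z)) := by
          rw [ENNReal.ofReal_add hZpos.le (by positivity),
            ENNReal.ofReal_mul h1lam.le,
            ENNReal.ofReal_mul (Real.exp_nonneg _),
            ENNReal.ofReal_mul (by positivity : (0:ℝ) ≤ (lam ^ d)⁻¹), hA, hB]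
          exact combined
        exact (ENNReal.ofReal_le_ofReal_iff (by positivity)).1 h'
      have hexp : Real.exp ((1 - lam) * g x₀) ≤ Real.exp ((1 - lam) * ε) :=
        Real.exp_le_exp.2 (by nlinarith)
      have hrhs : Real.exp ((1 - lam) * g x₀) * ((lam ^ d)⁻¹ * Z) ≤
          Real.exp ((1 - lam) * ε) * ((lam ^ d)⁻¹ * Z) :=
        mul_le_mul_of_nonneg_right hexp (by positivity)
      calc Z + (1 - lam) * J ≤ Real.exp ((1 - lam) * ε) * ((lam ^ d)⁻¹ * Z) :=
            le_trans hreal hrhs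
        _ = ((lam ^ d)⁻¹ * Real.exp ((1 - lam) * ε)) * Z := by ring
    -- take the limit lam → 1⁻
    set ψ : ℝ → ℝ := fun lam => (lam ^ d)⁻¹ * Real.exp ((1 - lam) * ε) with hψdef
    have hψ1 : ψ 1 = 1 := by simp [hψdef]
    have hderiv : HasDerivAt ψ (-((d : ℝ) + ε)) 1 := by
      have h1 : HasDerivAt (fun lam : ℝ => (lam ^ d)⁻¹) (-(d : ℝ)) 1 := by
        have := (hasDerivAt_pow d (1:ℝ)).inv (by simp)
        simp at this; exact this
      have h2 : HasDerivAt (fun lam : ℝ => Real.exp ((1 - lam) * ε)) (-ε) 1 := by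
        have hin : HasDerivAt (fun lam : ℝ => (1 - lam) * ε) (-ε) 1 := by
          have := ((hasDerivAt_id (1:ℝ)).const_sub 1).mul_const ε
          simpa using this
        have := hin.exp
        simpa using this
      have h3 := h1.mul h2
      simp only [one_pow, inv_one, sub_self, zero_mul, Real.exp_zero, mul_one, one_mul] at h3
      exact h3.congr_deriv (by ring)
    have hslope : Tendsto (slope ψ 1) (𝓝[≠] (1:ℝ)) (𝓝 (-((d:ℝ) + ε))) :=
      hasDerivAt_iff_tendsto_slope.1 hderiv
    have htend : Tendsto (fun lam => Z * ((ψ lam - 1) / (1 - lam))) (𝓝[<] (1:ℝ))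
        (𝓝 (Z * ((d:ℝ) + ε))) := by
      have heq : ∀ lam : ℝ, Z * ((ψ lam - 1) / (1 - lam)) = Z * (-(slope ψ 1 lam)) := by
        intro lam
        rw [slope_def_field, hψ1, ← div_neg, neg_sub]
      have h4 : Tendsto (fun lam => Z * (-(slope ψ 1 lam))) (𝓝[≠] (1:ℝ))
          (𝓝 (Z * ((d:ℝ) + ε))) := by
        have := (hslope.neg).const_mul Z
        simpa using this
      exact Tendsto.congr (fun lam => (heq lam).symm)
        (h4.mono_left (nhdsWithin_mono 1 fun x hx => ne_of_lt hx))
    have hev : ∀ᶠ lam in 𝓝[<] (1:ℝ), J ≤ Z * ((ψ lam - 1) / (1 - lam)) := by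
      filter_upwards [Ioo_mem_nhdsLT_of_mem (by norm_num : (1:ℝ) ∈ Set.Ioc 0 1)]
        with lam hlam
      obtain ⟨hlam0, hlam1⟩ := hlam
      have h1lam : (0:ℝ) < 1 - lam := by linarith
      have hmain : Z + (1 - lam) * J ≤ ψ lam * Z := by
        simpa [hψdef] using main lam ⟨hlam0, hlam1⟩
      rw [mul_comm Z, div_mul_eq_mul_div, le_div_iff₀ h1lam]
      nlinarith [hmain]
    exact ge_of_tendsto htend hev
  -- conclude
  by_contra hcon
  push_neg at hcon
  set c := (J - Z * d) / 2 with hcdef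
  have hc : 0 < c := by rw [hcdef]; linarith
  have := key (c / Z) (div_pos hc hZpos)
  rw [mul_add, mul_div_cancel₀ _ (ne_of_gt hZpos)] at this
  nlinarith

/-- Utility guarantee of the Gibbs measure: sampling from the density proportional to
`exp(-k F)` on a convex set `K ⊆ ℝ^d` gives expected value at most `inf_K F + d / k`. -/
theorem gibbs_utility {d : ℕ} (K : Set (EuclideanSpace ℝ (Fin d))) (hK : Convex ℝ K)
    (hKne : K.Nonempty) (k : ℝ) (hk : 0 < k)
    (F : EuclideanSpace ℝ (Fin d) → ℝ) (hF : ConvexOn ℝ K F) (hFmeas : Measurable F)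
    (hint : IntegrableOn (fun x => Real.exp (-k * F x)) K)
    (hint' : IntegrableOn (fun x => F x * Real.exp (-k * F x)) K)
    (hZ : 0 < ∫ x in K, Real.exp (-k * F x))
    (hBdd : BddBelow (F '' K)) :
    (∫ x in K, F x * Real.exp (-k * F x)) / (∫ x in K, Real.exp (-k * F x)) ≤
      sInf (F '' K) + d / k := by
  classical
  set Z1 := ∫ x in K, Real.exp (-k * F x) with hZ1def
  set I1 := ∫ x in K, F x * Real.exp (-k * F x) with hI1def
  set m := sInf (F '' K) with hm_def
  have hm : ∀ x ∈ K, m ≤ F x := fun x hx => csInf_le hBdd ⟨x, hx, rfl⟩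
  set c := Real.exp (k * m) with hc_def
  have hc : 0 < c := Real.exp_pos _
  set g : EuclideanSpace ℝ (Fin d) → ℝ := fun x => k * (F x - m) with hg_def
  have hgexp : ∀ x, Real.exp (-g x) = c * Real.exp (-k * F x) := by
    intro x
    rw [hc_def, ← Real.exp_add]
    congr 1
    simp only [hg_def]
    ring
  have hgcvx : ConvexOn ℝ K g := by
    refine ⟨hK, fun x hx y hy a b ha hb hab => ?_⟩
    have h := hF.2 hx hy ha hb hab
    simp only [hg_def, smul_eq_mul] at *
    have hab' : (a + b) * (k * m) = k * m := by rw [hab]; ring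
    nlinarith [mul_le_mul_of_nonneg_left h hk.le, hab']
  have hgmeas : Measurable g := (hFmeas.sub_const m).const_mul k
  have hg0 : ∀ x ∈ K, 0 ≤ g x := fun x hx => by
    have := hm x hx
    simp only [hg_def]
    nlinarith
  have hinf : ∀ ε > 0, ∃ x₀ ∈ K, g x₀ < ε := by
    intro ε hε
    have hεk : 0 < ε / k := div_pos hε hk
    have hlt : sInf (F '' K) < m + ε / k := by rw [← hm_def]; linarith
    obtain ⟨y, hy, hylt⟩ := exists_lt_of_csInf_lt (hKne.image F) hlt
    obtain ⟨x₀, hx₀K, rfl⟩ := hy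
    refine ⟨x₀, hx₀K, ?_⟩
    have h1 : F x₀ - m < ε / k := by linarith
    have h2 : k * (F x₀ - m) < k * (ε / k) := mul_lt_mul_of_pos_left h1 hk
    have h3 : k * (ε / k) = ε := by field_simp
    simp only [hg_def]
    linarith
  have hefun : (fun x => Real.exp (-g x)) = fun x => c * Real.exp (-k * F x) :=
    funext hgexp
  have hint1 : IntegrableOn (fun x => Real.exp (-g x)) K := by
    rw [hefun]; exact hint.const_mul c
  have hgfun : (fun x => g x * Real.exp (-g x)) =
      fun x => (c * k) * (F x * Real.exp (-k * F x)) - (c * k * m) * Real.exp (-k * F x) := by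
    funext x
    rw [hgexp x]
    simp only [hg_def]
    ring
  have hint2 : IntegrableOn (fun x => g x * Real.exp (-g x)) K := by
    rw [hgfun]
    exact (hint'.const_mul (c * k)).sub (hint.const_mul (c * k * m))
  have hZg : (∫ x in K, Real.exp (-g x)) = c * Z1 := by
    rw [hefun, integral_const_mul]
  have hJg : (∫ x in K, g x * Real.exp (-g x)) = c * k * I1 - c * k * m * Z1 := by
    rw [hgfun, integral_sub (hint'.const_mul (c * k)) (hint.const_mul (c * k * m)),
      integral_const_mul, integral_const_mul]
  have hZgpos : 0 < ∫ x in K, Real.exp (-g x) := by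
    rw [hZg]; positivity
  have core := gibbs_core K hK g hgcvx hgmeas hg0 hinf hint1 hint2 hZgpos
  rw [hZg, hJg] at core
  -- core : c*k*I1 - c*k*m*Z1 ≤ d * (c * Z1)
  have core' : c * (k * I1 - k * m * Z1) ≤ c * ((d : ℝ) * Z1) := by nlinarith [core]
  have h2 : k * I1 - k * m * Z1 ≤ (d : ℝ) * Z1 := le_of_mul_le_mul_left core' hc
  rw [div_le_iff₀ hZ, ← mul_le_mul_iff_right₀ hk]
  have h3 : k * ((m + (d : ℝ) / k) * Z1) = k * m * Z1 + (d : ℝ) * Z1 := by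
    field_simp
  rw [h3]
  linarith
end

section
/- Let v be uniform on {-1,1}^d, and suppose for each coordinate j the conditional distributions P_{1,j}, P_{-1,j} of the observations given v_j = 1, v_j = -1 satisfy ∑_{j=1}^d TV(P_{1,j}, P_{-1,j})² ≤ (δ²/σ²)·k. Then any estimator v̂ of v from the observations satisfies E[d_H(v̂, v)] ≥ (d/2)·(1 - (δ√k)/(σ√d)), where d_H is Hamming distance on sign patterns. -/
open MeasureTheory

/-- The total variation distance `TV(P,Q) = sup_S |P(S) - Q(S)|`. -/
noncomputable def tvDist {Ω : Type*} [MeasurableSpace Ω] (P Q : Measure Ω) : ℝ :=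
  sSup {r : ℝ | ∃ A : Set Ω, MeasurableSet A ∧ r = |(P A).toReal - (Q A).toReal|}

lemma abs_le_tvDist {Ω : Type*} [MeasurableSpace Ω] (P Q : Measure Ω)
    [IsFiniteMeasure P] [IsFiniteMeasure Q] {A : Set Ω} (hA : MeasurableSet A) :
    |(P A).toReal - (Q A).toReal| ≤ tvDist P Q := by
  apply le_csSup
  · refine ⟨(P Set.univ).toReal + (Q Set.univ).toReal, ?_⟩
    rintro r ⟨B, hB, rfl⟩
    have h1 : (P B).toReal ≤ (P Set.univ).toReal :=
      ENNReal.toReal_mono (measure_ne_top _ _) (measure_mono (Set.subset_univ _))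
    have h2 : (Q B).toReal ≤ (Q Set.univ).toReal :=
      ENNReal.toReal_mono (measure_ne_top _ _) (measure_mono (Set.subset_univ _))
    rw [abs_sub_le_iff]
    constructor <;> nlinarith [ENNReal.toReal_nonneg (a := P B), ENNReal.toReal_nonneg (a := Q B)]
  · exact ⟨A, hA, rfl⟩

lemma tvDist_nonneg' {Ω : Type*} [MeasurableSpace Ω] (P Q : Measure Ω)
    [IsFiniteMeasure P] [IsFiniteMeasure Q] : 0 ≤ tvDist P Q := by
  have := abs_le_tvDist P Q (A := ∅) MeasurableSet.empty
  simpa using this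

lemma card_filter_coord (d : ℕ) (j : Fin d) (b : Bool) :
    (Finset.univ.filter fun v : Fin d → Bool => v j = b).card = 2 ^ (d - 1) := by
  rw [← Fintype.card_subtype]
  have e : {v : Fin d → Bool // v j = b} ≃ ({i : Fin d // i ≠ j} → Bool) :=
    { toFun := fun v i => v.1 i
      invFun := fun f => ⟨fun i => if h : i = j then b else f ⟨i, h⟩, by simp⟩
      left_inv := by
        rintro ⟨v, hv⟩
        ext i
        dsimp only
        split_ifs with h
        · subst h; exact hv.symm
        · rfl
      right_inv := by
        rintro f
        ext i
        exact dif_neg i.2 }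
  rw [Fintype.card_congr e]
  simp [Fintype.card_fun]

lemma isProb_avg {d : ℕ} {Ω : Type*} [MeasurableSpace Ω]
    (P : (Fin d → Bool) → Measure Ω) (hP : ∀ v, IsProbabilityMeasure (P v))
    (j : Fin d) (b : Bool) :
    IsProbabilityMeasure
      (((2 : ENNReal) ^ (d - 1))⁻¹ • ∑ v ∈ Finset.univ.filter fun v => v j = b, P v) := by
  constructor
  rw [Measure.smul_apply, Measure.finset_sum_apply, smul_eq_mul]
  have : ∀ v ∈ Finset.univ.filter fun v : Fin d → Bool => v j = b,
      P v Set.univ = 1 := fun v _ => (hP v).measure_univ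
  rw [Finset.sum_congr rfl this, Finset.sum_const, card_filter_coord d j b]
  simp only [nsmul_eq_mul, mul_one, Nat.cast_pow, Nat.cast_ofNat]
  exact ENNReal.inv_mul_cancel (by positivity) (by simp)

lemma smul_sum_apply_toReal {d : ℕ} {Ω : Type*} [MeasurableSpace Ω]
    (P : (Fin d → Bool) → Measure Ω) (hP : ∀ v, IsProbabilityMeasure (P v))
    (s : Finset (Fin d → Bool)) (B : Set Ω) :
    ((((2 : ENNReal) ^ (d - 1))⁻¹ • ∑ v ∈ s, P v) B).toReal
      = ((2 : ℝ) ^ (d - 1))⁻¹ * ∑ v ∈ s, (P v B).toReal := by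
  rw [Measure.smul_apply, smul_eq_mul, ENNReal.toReal_mul, Measure.finset_sum_apply,
    ENNReal.toReal_sum (fun v _ => (haveI := hP v; measure_ne_top _ _))]
  congr 1
  simp [ENNReal.toReal_inv]

lemma integral_hamming_card {d : ℕ} {Ω : Type*} [MeasurableSpace Ω] (μ : Measure Ω)
    [IsProbabilityMeasure μ]
    (v : Fin d → Bool) (vhat : Ω → Fin d → Bool) (hvhat : Measurable vhat) :
    ∫ ω, ((Finset.univ.filter fun j => vhat ω j ≠ v j).card : ℝ) ∂μ
      = ∑ j, (μ {ω | vhat ω j ≠ v j}).toReal := by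
  have hmeasS : ∀ j : Fin d, MeasurableSet {ω | vhat ω j ≠ v j} := fun j =>
    ((measurable_pi_apply j).comp hvhat) ((measurableSet_singleton (v j)).compl)
  calc ∫ ω, ((Finset.univ.filter fun j => vhat ω j ≠ v j).card : ℝ) ∂μ
      = ∫ ω, ∑ j, Set.indicator {ω' | vhat ω' j ≠ v j} (fun _ => (1:ℝ)) ω ∂μ := by
        refine integral_congr_ae (Filter.Eventually.of_forall fun ω => ?_)
        simp only []
        rw [Finset.card_filter]
        push_cast
        refine Finset.sum_congr rfl fun j _ => ?_
        simp [Set.indicator_apply]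
    _ = ∑ j, ∫ ω, Set.indicator {ω' | vhat ω' j ≠ v j} (fun _ => (1:ℝ)) ω ∂μ :=
        integral_finset_sum _ fun j _ => (integrable_const (1:ℝ)).indicator (hmeasS j)
    _ = ∑ j, (μ {ω | vhat ω j ≠ v j}).toReal :=
        Finset.sum_congr rfl fun j _ => integral_indicator_one (hmeasS j)

/-- Lower bound on the expected Hamming error of estimating a uniformly random sign
vector `v ∈ {-1,1}^d` (encoded by `Fin d → Bool`) from observations whose per-coordinate
conditional distributions `P_{1,j}, P_{-1,j}` have total variations satisfying
`∑_j TV² ≤ δ²k/σ²`. -/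
theorem hamming_estimation_lower_bound {d : ℕ} (hd : 0 < d) {Ω : Type*} [MeasurableSpace Ω]
    (δ σ : ℝ) (k : ℕ) (hδ : 0 < δ) (hσ : 0 < σ)
    (P : (Fin d → Bool) → Measure Ω) (hP : ∀ v, IsProbabilityMeasure (P v))
    (vhat : Ω → Fin d → Bool) (hvhat : Measurable vhat)
    (hTV : ∑ j : Fin d,
        (tvDist
          (((2 : ENNReal) ^ (d - 1))⁻¹ • ∑ v ∈ Finset.univ.filter fun v => v j = true, P v)
          (((2 : ENNReal) ^ (d - 1))⁻¹ •
            ∑ v ∈ Finset.univ.filter fun v => v j = false, P v)) ^ 2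
        ≤ δ ^ 2 / σ ^ 2 * k) :
    (d : ℝ) / 2 * (1 - δ * Real.sqrt k / (σ * Real.sqrt d)) ≤
      ((2 : ℝ) ^ d)⁻¹ * ∑ v : Fin d → Bool, ∫ ω,
        ((Finset.univ.filter fun j => vhat ω j ≠ v j).card : ℝ) ∂(P v) := by
  classical
  set T : Fin d → ℝ := fun j => tvDist
      (((2 : ENNReal) ^ (d - 1))⁻¹ • ∑ v ∈ Finset.univ.filter fun v => v j = true, P v)
      (((2 : ENNReal) ^ (d - 1))⁻¹ • ∑ v ∈ Finset.univ.filter fun v => v j = false, P v)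
    with hTdef
  have h2pos : (0:ℝ) < 2 ^ (d - 1) := by positivity
  -- key per-coordinate bound
  have key : ∀ j : Fin d, (2:ℝ) ^ (d-1) * (1 - T j)
      ≤ ∑ v : Fin d → Bool, (P v {ω | vhat ω j ≠ v j}).toReal := by
    intro j
    haveI h1 := isProb_avg P hP j true
    haveI h0 := isProb_avg P hP j false
    set A : Set Ω := {ω | vhat ω j = true} with hA
    have hAmeas : MeasurableSet A :=
      ((measurable_pi_apply j).comp hvhat) (measurableSet_singleton true)
    set μ1 := ((2 : ENNReal) ^ (d - 1))⁻¹ •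
      ∑ v ∈ Finset.univ.filter fun v : Fin d → Bool => v j = true, P v with hμ1
    set μ0 := ((2 : ENNReal) ^ (d - 1))⁻¹ •
      ∑ v ∈ Finset.univ.filter fun v : Fin d → Bool => v j = false, P v with hμ0
    have hsplit : ∑ v : Fin d → Bool, (P v {ω | vhat ω j ≠ v j}).toReal
        = ∑ v ∈ Finset.univ.filter (fun v : Fin d → Bool => v j = true), (P v Aᶜ).toReal
          + ∑ v ∈ Finset.univ.filter (fun v : Fin d → Bool => v j = false), (P v A).toReal := by
      rw [← Finset.sum_filter_add_sum_filter_not Finset.univ (fun v : Fin d → Bool => v j = true)]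
      congr 1
      · refine Finset.sum_congr rfl fun v hv => ?_
        simp only [Finset.mem_filter] at hv
        have hset : {ω | vhat ω j ≠ v j} = Aᶜ := by
          ext ω; simp [hA, hv.2]
        rw [hset]
      · rw [show (Finset.univ.filter fun v : Fin d → Bool => ¬ v j = true)
            = Finset.univ.filter (fun v : Fin d → Bool => v j = false) from
            Finset.filter_congr (fun v _ => by simp)]
        refine Finset.sum_congr rfl fun v hv => ?_
        simp only [Finset.mem_filter] at hv
        have hset : {ω | vhat ω j ≠ v j} = A := by
          ext ω; simp [hA, hv.2]
        rw [hset]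
    have e1 : ∑ v ∈ Finset.univ.filter (fun v : Fin d → Bool => v j = true), (P v Aᶜ).toReal
        = (2:ℝ) ^ (d-1) * (μ1 Aᶜ).toReal := by
      rw [hμ1, smul_sum_apply_toReal P hP, ← mul_assoc, mul_inv_cancel₀ (ne_of_gt h2pos), one_mul]
    have e0 : ∑ v ∈ Finset.univ.filter (fun v : Fin d → Bool => v j = false), (P v A).toReal
        = (2:ℝ) ^ (d-1) * (μ0 A).toReal := by
      rw [hμ0, smul_sum_apply_toReal P hP, ← mul_assoc, mul_inv_cancel₀ (ne_of_gt h2pos), one_mul]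
    have ecompl : (μ1 Aᶜ).toReal = 1 - (μ1 A).toReal := by
      rw [prob_compl_eq_one_sub hAmeas,
        ENNReal.toReal_sub_of_le prob_le_one ENNReal.one_ne_top, ENNReal.toReal_one]
    have habs : (μ1 A).toReal - (μ0 A).toReal ≤ T j :=
      le_trans (le_abs_self _) (abs_le_tvDist _ _ hAmeas)
    rw [hsplit, e1, e0, ecompl]
    nlinarith [mul_le_mul_of_nonneg_left habs (le_of_lt h2pos)]
  -- rewrite the expected error
  have hswap : ∑ v : Fin d → Bool, ∫ ω,
        ((Finset.univ.filter fun j => vhat ω j ≠ v j).card : ℝ) ∂(P v)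
      = ∑ j : Fin d, ∑ v : Fin d → Bool, (P v {ω | vhat ω j ≠ v j}).toReal := by
    rw [Finset.sum_congr rfl fun v _ =>
      (haveI := hP v; integral_hamming_card (P v) v vhat hvhat)]
    exact Finset.sum_comm
  have hlower : (2:ℝ) ^ (d-1) * ∑ j : Fin d, (1 - T j)
      ≤ ∑ v : Fin d → Bool, ∫ ω,
          ((Finset.univ.filter fun j => vhat ω j ≠ v j).card : ℝ) ∂(P v) := by
    rw [hswap, Finset.mul_sum]
    exact Finset.sum_le_sum fun j _ => key j
  -- pass to the normalized average
  have hdd : d - 1 + 1 = d := Nat.succ_pred_eq_of_pos hd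
  have h2dd : (2:ℝ) ^ d = (2:ℝ) ^ (d-1) * 2 := by rw [← hdd, pow_succ]; rw [hdd]
  have hRHS : (∑ j : Fin d, (1 - T j)) / 2
      ≤ ((2 : ℝ) ^ d)⁻¹ * ∑ v : Fin d → Bool, ∫ ω,
          ((Finset.univ.filter fun j => vhat ω j ≠ v j).card : ℝ) ∂(P v) := by
    have hhalf : ((2:ℝ)^d)⁻¹ * (2:ℝ)^(d-1) = 1/2 := by
      rw [h2dd]; field_simp
    calc (∑ j : Fin d, (1 - T j)) / 2
        = ((2:ℝ)^d)⁻¹ * (2:ℝ)^(d-1) * ∑ j : Fin d, (1 - T j) := by rw [hhalf]; ring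
      _ ≤ _ := by
          rw [mul_assoc]
          exact mul_le_mul_of_nonneg_left hlower (by positivity)
  -- Cauchy-Schwarz
  have hTnon : ∀ j, 0 ≤ T j := fun j => by
    haveI := isProb_avg P hP j true
    haveI := isProb_avg P hP j false
    exact tvDist_nonneg' _ _
  have hCS : (∑ j : Fin d, T j) ^ 2 ≤ (d : ℝ) * ∑ j : Fin d, (T j) ^ 2 := by
    have := Finset.sum_mul_sq_le_sq_mul_sq Finset.univ (fun _ : Fin d => (1:ℝ)) T
    simpa using this
  set s := Real.sqrt d with hs
  set r := Real.sqrt k with hr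
  have hs2 : s * s = d := Real.mul_self_sqrt (by positivity)
  have hr2 : r * r = k := Real.mul_self_sqrt (by positivity)
  have hspos : 0 < s := Real.sqrt_pos.mpr (by exact_mod_cast hd)
  have hrnon : 0 ≤ r := Real.sqrt_nonneg _
  have hTbound : ∑ j : Fin d, T j ≤ s * δ * r / σ := by
    have hB : (0:ℝ) ≤ s * δ * r / σ := by positivity
    have hsq : (∑ j : Fin d, T j) ^ 2 ≤ (s * δ * r / σ) ^ 2 := by
      calc (∑ j : Fin d, T j) ^ 2 ≤ (d : ℝ) * ∑ j : Fin d, (T j) ^ 2 := hCS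
        _ ≤ (d : ℝ) * (δ ^ 2 / σ ^ 2 * k) := by
            apply mul_le_mul_of_nonneg_left hTV (by positivity)
        _ = (s * δ * r / σ) ^ 2 := by
            have h : (s * δ * r / σ) ^ 2 = (s*s) * δ^2 * (r*r) / σ^2 := by ring
            rw [h, hs2, hr2]; ring
    nlinarith [Finset.sum_nonneg fun j (_ : j ∈ Finset.univ) => hTnon j, hB, hsq]
  -- final algebra
  have hsum1 : ∑ j : Fin d, (1 - T j) = (d : ℝ) - ∑ j : Fin d, T j := by
    rw [Finset.sum_sub_distrib]
    simp
  refine le_trans ?_ hRHS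
  rw [hsum1]
  have hkey : (d:ℝ) * (δ * r / (σ * s)) = s * δ * r / σ := by
    rw [← hs2]; field_simp
  nlinarith [hTbound, hkey]
end

section
/- Let ρ be defined by ρ = 1 + ∑_{α=1}^A ∏_{i=1}^α (f_{j_i}(z) - f_{j_i}(x)), where A is a random stopping time with Pr[A ≥ α] = 1/α! independent of the i.i.d. uniform indices j_i ∈ I. Then conditional on x and z, E[ρ | x, z] = exp(E_{i∈I}[f_i(z) - f_i(x)]). -/
open MeasureTheory

private lemma rho_aux_kernel {I : Type*} [Fintype I] [Nonempty I] [MeasurableSpace I]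
    [MeasurableSingletonClass I] (g : I → ℝ) :
    ∫ i, g i ∂((Fintype.card I : ENNReal)⁻¹ • Measure.count) =
      (Fintype.card I : ℝ)⁻¹ * ∑ i, g i := by
  have : IsProbabilityMeasure ((Fintype.card I : ENNReal)⁻¹ • Measure.count : Measure I) := by
    constructor
    simp [ENNReal.inv_mul_cancel, Fintype.card_ne_zero]
  rw [integral_smul_measure, integral_fintype (Integrable.of_finite)]
  simp [Measure.real, Measure.count_singleton, ENNReal.toReal_inv, smul_eq_mul, Finset.mul_sum]

private lemma rho_aux_prodInt {I : Type*} [Fintype I] [Nonempty I] [MeasurableSpace I]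
    [MeasurableSingletonClass I] (g : I → ℝ)
    (μJ : Measure (ℕ → I)) [IsProbabilityMeasure μJ]
    (hJ : ∀ α : ℕ, μJ.map (fun ω (i : Fin α) => ω i.val) =
      Measure.pi fun _ : Fin α => (Fintype.card I : ENNReal)⁻¹ • Measure.count)
    (n : ℕ) (m : ℝ) (hm : ∫ i, g i ∂((Fintype.card I : ENNReal)⁻¹ • Measure.count) = m) :
    ∫ ω, ∏ i ∈ Finset.Icc 1 n, g (ω i) ∂μJ = m ^ n := by
  set ν : Measure I := (Fintype.card I : ENNReal)⁻¹ • Measure.count with hν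
  have hνprob : IsProbabilityMeasure ν := by
    constructor
    simp [hν, ENNReal.inv_mul_cancel, Fintype.card_ne_zero]
  letI : MeasureSpace I := ⟨ν⟩
  haveI : IsProbabilityMeasure (volume : Measure I) := hνprob
  have h1 : ∀ ω : ℕ → I, (∏ i ∈ Finset.Icc 1 n, g (ω i)) =
      ∏ k : Fin (n+1), (if (k : ℕ) = 0 then 1 else g (ω (k : ℕ))) := by
    intro ω
    have e1 : (∏ i ∈ Finset.Icc 1 n, g (ω i)) = ∏ k ∈ Finset.range n, g (ω (1 + k)) := by
      rw [← Finset.Ico_add_one_right_eq_Icc, Finset.prod_Ico_eq_prod_range]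
      simp
    rw [e1, Fin.prod_univ_succ]
    simp only [Fin.val_zero, Fin.val_succ, Nat.succ_ne_zero, if_neg, if_pos, one_mul, if_true,
      if_false]
    simp only [add_comm 1]
    exact (Fin.prod_univ_eq_prod_range (fun x => g (ω (x + 1))) n).symm
  simp_rw [h1]
  have hmeas : Measurable (fun ω : ℕ → I => fun i : Fin (n+1) => ω i.val) :=
    measurable_pi_lambda _ fun i => measurable_pi_apply i.val
  have hF : Measurable (fun v : Fin (n+1) → I =>
      ∏ k : Fin (n+1), (if (k : ℕ) = 0 then (1:ℝ) else g (v k))) :=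
    measurable_of_countable _
  calc ∫ ω, ∏ k : Fin (n+1), (if (k : ℕ) = 0 then (1:ℝ) else g (ω (k : ℕ))) ∂μJ
      = ∫ v : Fin (n+1) → I, (∏ k : Fin (n+1), (if (k : ℕ) = 0 then (1:ℝ) else g (v k)))
          ∂(μJ.map (fun ω (i : Fin (n+1)) => ω i.val)) :=
        (integral_map hmeas.aemeasurable hF.aestronglyMeasurable).symm
    _ = m ^ n := by
        rw [hJ (n+1),
          show (fun _ : Fin (n+1) => ν) = (fun _ : Fin (n+1) => (volume : Measure I)) from rfl,
          ← MeasureTheory.volume_pi]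
        have key := MeasureTheory.integral_fintype_prod_eq_prod (𝕜 := ℝ) (ι := Fin (n+1))
          (E := fun _ => I) (μ := fun _ => (volume : Measure I))
          (f := fun (k : Fin (n+1)) (a : I) => if (k : ℕ) = 0 then (1:ℝ) else g a)
        rw [MeasureTheory.volume_pi, key, Fin.prod_univ_succ]
        simp only [Fin.val_zero, Fin.val_succ, Nat.succ_ne_zero, if_neg, if_pos,
          integral_const, probReal_univ, measure_univ, ENNReal.toReal_one, one_smul, one_mul, if_true]
        simp only [if_false]
        rw [Finset.prod_const, show (∫ x : I, g x) = m from hm]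
        simp

/-- Expectation of the rejection-sampling estimator `ρ`: with a stopping phase `A`
satisfying `Pr[A ≥ α] = 1/α!`, independent of i.i.d. uniform indices `j₁, j₂, …`, the
estimator `ρ = 1 + ∑_{α=1}^A ∏_{i=1}^α (f_{jᵢ}(z) - f_{jᵢ}(x))` satisfies
`E[ρ] = exp(E_{i ∈ I}[f_i(z) - f_i(x)])`. -/
theorem rho_expectation {I : Type*} [Fintype I] [Nonempty I] [MeasurableSpace I]
    [MeasurableSingletonClass I] {K : Type*} (f : I → K → ℝ) (x z : K)
    (μA : Measure ℕ) [IsProbabilityMeasure μA]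
    (hA : ∀ α : ℕ, μA {n | α ≤ n} = 1 / (α.factorial : ENNReal))
    (μJ : Measure (ℕ → I)) [IsProbabilityMeasure μJ]
    (hJ : ∀ α : ℕ, μJ.map (fun ω (i : Fin α) => ω i.val) =
      Measure.pi fun _ : Fin α => (Fintype.card I : ENNReal)⁻¹ • Measure.count) :
    ∫ p : ℕ × (ℕ → I),
        (1 + ∑ α ∈ Finset.Icc 1 p.1, ∏ i ∈ Finset.Icc 1 α, (f (p.2 i) z - f (p.2 i) x))
        ∂(μA.prod μJ) =
      Real.exp ((Fintype.card I : ℝ)⁻¹ * ∑ i, (f i z - f i x)) := by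
  classical
  set g : I → ℝ := fun i => f i z - f i x with hgdef
  set m : ℝ := (Fintype.card I : ℝ)⁻¹ * ∑ i, g i with hmdef
  set C : ℝ := ∑ i, |g i| with hCdef
  have hC0 : 0 ≤ C := Finset.sum_nonneg fun i _ => abs_nonneg _
  -- the pieces
  set P : ℕ → (ℕ → I) → ℝ := fun β ω => ∏ i ∈ Finset.Icc 1 β, g (ω i) with hPdef
  set a : ℕ → ℕ → ℝ := fun β n => if β ≤ n then (1:ℝ) else 0 with hadef
  set T : ℕ → ℕ × (ℕ → I) → ℝ := fun β p => a β p.1 * P β p.2 with hTdef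
  have hPmeas : ∀ β, Measurable (P β) := fun β =>
    Finset.measurable_prod _ fun i _ => (measurable_of_countable g).comp (measurable_pi_apply i)
  have hPbound : ∀ β ω, |P β ω| ≤ C ^ β := by
    intro β ω
    rw [hPdef]
    calc |∏ i ∈ Finset.Icc 1 β, g (ω i)| = ∏ i ∈ Finset.Icc 1 β, |g (ω i)| :=
          Finset.abs_prod _ _
      _ ≤ ∏ _i ∈ Finset.Icc 1 β, C := by
          refine Finset.prod_le_prod (fun i _ => abs_nonneg _) fun i _ => ?_
          exact Finset.single_le_sum (f := fun j => |g j|) (fun j _ => abs_nonneg _)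
            (Finset.mem_univ _)
      _ = C ^ β := by rw [Finset.prod_const, Nat.card_Icc]; simp
  have hPint : ∀ β, Integrable (P β) μJ := by
    intro β
    refine Integrable.mono' (integrable_const (C ^ β)) (hPmeas β).aestronglyMeasurable ?_
    exact Filter.Eventually.of_forall fun ω => by
      rw [Real.norm_eq_abs]; exact hPbound β ω
  have hPabs : ∀ β, ∫ ω, |P β ω| ∂μJ ≤ C ^ β := by
    intro β
    calc ∫ ω, |P β ω| ∂μJ ≤ ∫ _ω, C ^ β ∂μJ :=
          integral_mono (hPint β).abs (integrable_const _) (hPbound β)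
      _ = C ^ β := by simp
  have haint : ∀ β, Integrable (a β) μA := by
    intro β
    refine Integrable.mono' (integrable_const 1) (measurable_of_countable _).aestronglyMeasurable ?_
    refine Filter.Eventually.of_forall fun n => ?_
    rw [hadef]
    dsimp only
    split <;> simp
  have haval : ∀ β, ∫ n, a β n ∂μA = ((β.factorial : ℝ))⁻¹ := by
    intro β
    have hset : MeasurableSet {n : ℕ | β ≤ n} := (Set.to_countable _).measurableSet
    have : a β = Set.indicator {n : ℕ | β ≤ n} (fun _ => (1:ℝ)) := by
      funext n
      rw [hadef, Set.indicator_apply]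
      simp
    rw [this, integral_indicator_const _ hset, measureReal_def, hA β, smul_eq_mul, mul_one, one_div,
      ENNReal.toReal_inv]
    simp
  have hanonneg : ∀ β n, 0 ≤ a β n := by
    intro β n; rw [hadef]; dsimp only; split <;> norm_num
  have haabs : ∀ β n, |a β n| = a β n := fun β n => abs_of_nonneg (hanonneg β n)
  -- integrability and integral of each T β
  have hTint : ∀ β, Integrable (T β) (μA.prod μJ) := fun β =>
    Integrable.mul_prod (haint β) (hPint β)
  have hTval : ∀ β, ∫ p, T β p ∂(μA.prod μJ) = ((β.factorial : ℝ))⁻¹ * m ^ β := by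
    intro β
    rw [hTdef]
    dsimp only
    rw [integral_prod_mul (a β) (P β), haval β,
      rho_aux_prodInt g μJ hJ β m (by rw [rho_aux_kernel])]
  -- norm integral bound
  have hTnorm : ∀ β, ∫ p, ‖T β p‖ ∂(μA.prod μJ) ≤ C ^ β / β.factorial := by
    intro β
    have : (fun p : ℕ × (ℕ → I) => ‖T β p‖) = fun p => a β p.1 * |P β p.2| := by
      funext p
      rw [hTdef]
      dsimp only
      rw [Real.norm_eq_abs, abs_mul, haabs]
    rw [this, integral_prod_mul (a β) (fun ω => |P β ω|), haval β]
    rw [div_eq_inv_mul]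
    have h1 : (0:ℝ) ≤ ((β.factorial : ℝ))⁻¹ := by positivity
    exact mul_le_mul_of_nonneg_left (hPabs β) h1
  have hTsum : Summable fun β => ∫ p, ‖T β p‖ ∂(μA.prod μJ) := by
    refine Summable.of_nonneg_of_le (fun β => integral_nonneg fun p => norm_nonneg _)
      hTnorm ?_
    exact Real.summable_pow_div_factorial C
  -- pointwise identity
  have hpt : ∀ p : ℕ × (ℕ → I),
      (1 + ∑ α ∈ Finset.Icc 1 p.1, ∏ i ∈ Finset.Icc 1 α, (f (p.2 i) z - f (p.2 i) x)) =
      ∑' β, T β p := by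
    intro p
    have hz : ∀ β ∉ Finset.range (p.1 + 1), T β p = 0 := by
      intro β hb
      rw [Finset.mem_range, Nat.lt_succ_iff, not_le] at hb
      rw [hTdef, hadef]
      dsimp only
      rw [if_neg (by omega), zero_mul]
    rw [tsum_eq_sum hz, Finset.sum_range_succ']
    have hT0 : T 0 p = 1 := by
      rw [hTdef, hadef, hPdef]
      simp
    rw [hT0, add_comm]
    congr 1
    have he : ∀ i ∈ Finset.range p.1, T (i + 1) p = P (i + 1) p.2 := by
      intro i hi
      rw [Finset.mem_range] at hi
      rw [hTdef, hadef]
      dsimp only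
      rw [if_pos (by omega), one_mul]
    rw [Finset.sum_congr rfl he]
    have e1 : (∑ α ∈ Finset.Icc 1 p.1, P α p.2) = ∑ k ∈ Finset.range p.1, P (1 + k) p.2 := by
      rw [← Finset.Ico_add_one_right_eq_Icc, Finset.sum_Ico_eq_sum_range]
      simp
    rw [hPdef] at e1 ⊢
    dsimp only at e1 ⊢
    rw [e1]
    exact Finset.sum_congr rfl fun k _ => by rw [add_comm]
  calc ∫ p : ℕ × (ℕ → I),
        (1 + ∑ α ∈ Finset.Icc 1 p.1, ∏ i ∈ Finset.Icc 1 α, (f (p.2 i) z - f (p.2 i) x))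
        ∂(μA.prod μJ)
      = ∫ p, ∑' β, T β p ∂(μA.prod μJ) := by
        exact integral_congr_ae (Filter.Eventually.of_forall hpt)
    _ = ∑' β, ∫ p, T β p ∂(μA.prod μJ) :=
        (integral_tsum_of_summable_integral_norm hTint hTsum).symm
    _ = ∑' β, ((β.factorial : ℝ))⁻¹ * m ^ β := tsum_congr hTval
    _ = Real.exp m := by
        rw [Real.exp_eq_exp_ℝ, NormedSpace.exp_eq_tsum (𝕂 := ℝ)]
        simp [smul_eq_mul]
end
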